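/- arXiv:2311.04302 — 3 statements merged into one kernel-verified Lean document; each statement's English description precedes it below -/
import Mathlib

section
/- Every execution consistent in SRA is consistent in WRA: if an execution X = (E, po, rf, mo) with mo_x a strict total order on the writes to each location x satisfies strong-write-coherence (acyclicity of hb ∪ mo) and read-coherence (irreflexivity of rf⁻¹ ; mo_x ; hb for each x), then X satisfies porf-acyclicity (acyclicity of po ∪ rf) and weak-read-coherence (irreflexivity of hb_x ; [W] ; hb_x ; rf⁻¹ for each x). -/
namespace Relation

variable {α : Type*} {r s : α → α → Prop}

theorem irrefl_left_of_acyclic_or (h : ∀ a, ¬TransGen (fun a b => r a b ∨ s a b) a a) (a : α) :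
    ¬r a a :=
  fun hr => h a (.single (.inl hr))

theorem not_left_of_right_of_acyclic_or (h : ∀ a, ¬TransGen (fun a b => r a b ∨ s a b) a a)
    {a b : α} (hs : s a b) : ¬r b a :=
  fun hr => h a (.head (.inr hs) (.single (.inl hr)))

end Relation

theorem stmt_6_general {E Loc : Type*} (po rf : E → E → Prop) (mo : Loc → E → E → Prop)
    (W : Set E) (loc : E → Loc)
    (hb : E → E → Prop)
    (hhb : hb = Relation.TransGen (fun a b => po a b ∨ rf a b))
    (hmo_total : ∀ (x : Loc) (a b : E), a ∈ W → b ∈ W → loc a = x → loc b = x →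
      a ≠ b → mo x a b ∨ mo x b a)
    (hswc : ∀ e : E, ¬ Relation.TransGen (fun a b => hb a b ∨ ∃ x, mo x a b) e e)
    (hrc : ∀ (x : Loc) (r w w' : E), rf w r → mo x w w' → hb w' r → False) :
    (∀ e : E, ¬ Relation.TransGen (fun a b => po a b ∨ rf a b) e e) ∧
    (∀ (x : Loc) (w r w' : E), w ∈ W → w' ∈ W → loc w = x → loc w' = x → loc r = x →
      rf w r → hb w w' → hb w' r → False) := by
  refine ⟨hhb ▸ Relation.irrefl_left_of_acyclic_or hswc, ?_⟩
  intro x w r w' hw hw' hlw hlw' _ hrf hww' hw'r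
  rcases eq_or_ne w w' with rfl | hne
  · exact Relation.irrefl_left_of_acyclic_or hswc w hww'
  rcases hmo_total x w w' hw hw' hlw hlw' hne with hmo | hmo
  · exact hrc x r w w' hrf hmo hw'r
  · exact Relation.not_left_of_right_of_acyclic_or hswc ⟨x, hmo⟩ hww'

/-- Every execution consistent in SRA is consistent in WRA: strong-write-coherence
(acyclicity of hb ∪ mo) and read-coherence imply porf-acyclicity and
weak-read-coherence. -/
theorem stmt_6 {E Loc : Type*} (po rf : E → E → Prop) (mo : Loc → E → E → Prop)
    (W R : Set E) (loc : E → Loc)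
    (hb : E → E → Prop)
    (hhb : hb = Relation.TransGen (fun a b => po a b ∨ rf a b))
    (hrfWR : ∀ w r, rf w r → w ∈ W ∧ r ∈ R ∧ loc w = loc r)
    (hrf_unique : ∀ w w' r, rf w r → rf w' r → w = w')
    (hmo_dom : ∀ (x : Loc) (a b : E), mo x a b → a ∈ W ∧ b ∈ W ∧ loc a = x ∧ loc b = x)
    (hmo_irr : ∀ (x : Loc) (a : E), ¬ mo x a a)
    (hmo_trans : ∀ (x : Loc) (a b c : E), mo x a b → mo x b c → mo x a c)
    (hmo_total : ∀ (x : Loc) (a b : E), a ∈ W → b ∈ W → loc a = x → loc b = x →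
      a ≠ b → mo x a b ∨ mo x b a)
    (hswc : ∀ e : E, ¬ Relation.TransGen (fun a b => hb a b ∨ ∃ x, mo x a b) e e)
    (hrc : ∀ (x : Loc) (r w w' : E), rf w r → mo x w w' → hb w' r → False) :
    (∀ e : E, ¬ Relation.TransGen (fun a b => po a b ∨ rf a b) e e) ∧
    (∀ (x : Loc) (w r w' : E), w ∈ W → w' ∈ W → loc w = x → loc w' = x → loc r = x →
      rf w r → hb w w' → hb w' r → False) :=
  stmt_6_general po rf mo W loc hb hhb hmo_total hswc hrc
end

section
/- Minimal coherence implies Relaxed-consistency (per location): Fix a location x, let W_x be the writes to x and R_x the reads of x, let po_x and rf_x be relations on events of x with rf_x ⊆ W_x × R_x, and let m̄ be a binary relation on W_x. Suppose (i) the relation po_x ∪ rf_x ∪ m̄ is acyclic, and (ii) every triplet is safe: for all (w, r) ∈ rf_x and w' ∈ W_x with w' ≠ w, either (w', r) ∉ (po_x ∪ rf_x)⁺ or (w', w) ∈ (po_x ∪ rf_x ∪ m̄)⁺. Then there exists a strict total order mo_x on W_x extending m̄ such that (a) mo_x ; po_x is irreflexive, and (b) rf_x⁻¹ ; mo_x ;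 rf_x? ; po_x is irreflexive. -/
/-!
Since `po ∪ rf ∪ m̄` is acyclic, its reflexive-transitive closure is a partial order, and any
linear extension of it (Szpilrajn), restricted to the writes, is a candidate `mo`. Such an `mo`
never runs against `(po ∪ rf ∪ m̄)⁺`, which already gives write-coherence. For read-coherence,
take `w →rf r`, `w →mo w'` with `w'` reaching `r` through `rf? ; po`: the triplet `(w, r, w')` is
safe only if `(w', w) ∈ (po ∪ rf ∪ m̄)⁺`, which `mo` cannot contradict.
-/

open Relation

section Acyclic

variable {E : Type*} {r : E → E → Prop}

theorem isPartialOrder_reflTransGen_of_acyclic (hr : ∀ e, ¬ TransGen r e e) :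
    IsPartialOrder E (ReflTransGen r) where
  refl _ := ReflTransGen.refl
  trans _ _ _ := ReflTransGen.trans
  antisymm a b hab hba := by
    rcases reflTransGen_iff_eq_or_transGen.mp hab with rfl | hab
    · rfl
    · exact absurd (hab.trans_left hba) (hr a)

theorem exists_strictTotalOrderOn_of_acyclic (W : Set E) (hr : ∀ e, ¬ TransGen r e e) :
    ∃ mo : E → E → Prop,
      (∀ a b, mo a b → a ∈ W ∧ b ∈ W) ∧
      (∀ a, ¬ mo a a) ∧
      Transitive mo ∧
      (∀ a b, a ∈ W → b ∈ W → a ≠ b → mo a b ∨ mo b a) ∧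
      (∀ a b, a ∈ W → b ∈ W → TransGen r a b → mo a b) ∧
      (∀ a b, mo a b → ¬ TransGen r b a) := by
  have := isPartialOrder_reflTransGen_of_acyclic hr
  obtain ⟨s, hlin, hrs⟩ := extend_partialOrder (ReflTransGen r)
  have hs : ∀ {a b}, TransGen r a b → s a b := fun h => hrs _ _ h.to_reflTransGen
  refine ⟨fun a b => a ∈ W ∧ b ∈ W ∧ a ≠ b ∧ s a b, fun a b h => ⟨h.1, h.2.1⟩,
    fun a h => h.2.2.1 rfl, ?_, ?_, ?_, ?_⟩
  · rintro a b c ⟨ha, -, hab, sab⟩ ⟨-, hc, -, sbc⟩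
    refine ⟨ha, hc, ?_, _root_.trans sab sbc⟩
    rintro rfl
    exact hab (antisymm sab sbc)
  · intro a b ha hb hne
    rcases total_of s a b with h | h
    · exact Or.inl ⟨ha, hb, hne, h⟩
    · exact Or.inr ⟨hb, ha, hne.symm, h⟩
  · intro a b ha hb h
    exact ⟨ha, hb, fun hab => hr a (hab ▸ h), hs h⟩
  · rintro a b ⟨-, -, hne, sab⟩ hba
    exact hne (antisymm sab (hs hba))

end Acyclic

theorem stmt_11_general {E : Type*} (W : Set E)
    (po rf mbar : E → E → Prop)
    (hmbar : ∀ a b, mbar a b → a ∈ W ∧ b ∈ W)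
    (hacy : ∀ e, ¬ Relation.TransGen (fun a b => po a b ∨ rf a b ∨ mbar a b) e e)
    (hsafe : ∀ w r w', rf w r → w' ∈ W → w' ≠ w →
      ¬ Relation.TransGen (fun a b => po a b ∨ rf a b) w' r ∨
        Relation.TransGen (fun a b => po a b ∨ rf a b ∨ mbar a b) w' w) :
    ∃ mo : E → E → Prop,
      (∀ a b, mo a b → a ∈ W ∧ b ∈ W) ∧
      (∀ a, ¬ mo a a) ∧
      Transitive mo ∧
      (∀ a b, a ∈ W → b ∈ W → a ≠ b → mo a b ∨ mo b a) ∧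
      (∀ a b, mbar a b → mo a b) ∧
      (∀ a b, mo a b → po b a → False) ∧
      (∀ r w w' e, rf w r → mo w w' → (w' = e ∨ rf w' e) → po e r → False) := by
  obtain ⟨mo, hdom, hirr, htrans, htot, hext, hcompat⟩ :=
    exists_strictTotalOrderOn_of_acyclic W hacy
  refine ⟨mo, hdom, hirr, htrans, htot, ?_, ?_, ?_⟩
  · intro a b h
    obtain ⟨ha, hb⟩ := hmbar a b h
    exact hext a b ha hb (.single (Or.inr (Or.inr h)))
  · exact fun a b hab hba => hcompat a b hab (.single (Or.inl hba))
  · intro r w w' e hwr hww' he her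
    have hreach : TransGen (fun a b => po a b ∨ rf a b) w' r := by
      rcases he with rfl | hw'e
      · exact .single (Or.inl her)
      · exact .head (Or.inr hw'e) (.single (Or.inl her))
    have hne : w' ≠ w := fun h => hirr w (h ▸ hww')
    rcases hsafe w r w' hwr (hdom w w' hww').2 hne with h | h
    · exact h hreach
    · exact hcompat w w' hww' h

/-- Minimal coherence implies Relaxed-consistency (per location):
if po_x ∪ rf_x ∪ m̄ is acyclic and every triplet is safe, then m̄ extends to a
strict total order mo_x on the writes W_x satisfying relaxed-write-coherence
and relaxed-read-coherence. -/
theorem stmt_11 {E : Type*} (W R : Set E) (hWfin : W.Finite) (hRfin : R.Finite)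
    (hdisj : Disjoint W R)
    (po rf mbar : E → E → Prop)
    (hpo_irr : ∀ e, ¬ po e e) (hpo_trans : Transitive po)
    (hrf : ∀ w r, rf w r → w ∈ W ∧ r ∈ R)
    (hrf_fun : ∀ w w' r, rf w r → rf w' r → w = w')
    (hmbar : ∀ a b, mbar a b → a ∈ W ∧ b ∈ W)
    (hacy : ∀ e, ¬ Relation.TransGen (fun a b => po a b ∨ rf a b ∨ mbar a b) e e)
    (hsafe : ∀ w r w', rf w r → w' ∈ W → w' ≠ w →
      ¬ Relation.TransGen (fun a b => po a b ∨ rf a b) w' r ∨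
        Relation.TransGen (fun a b => po a b ∨ rf a b ∨ mbar a b) w' w) :
    ∃ mo : E → E → Prop,
      (∀ a b, mo a b → a ∈ W ∧ b ∈ W) ∧
      (∀ a, ¬ mo a a) ∧
      Transitive mo ∧
      (∀ a b, a ∈ W → b ∈ W → a ≠ b → mo a b ∨ mo b a) ∧
      (∀ a b, mbar a b → mo a b) ∧
      (∀ a b, mo a b → po b a → False) ∧
      (∀ r w w' e, rf w r → mo w w' → (w' = e ∨ rf w' e) → po e r → False) :=
  stmt_11_general W po rf mbar hmbar hacy hsafe
end

section
/- Minimal coherence implies SRA-consistency: Let E be a finite set of events with per-location write sets W_x, let hb be a strict partial order on E (the happens-before order), rf a relation assigning to each read on x a unique write in W_x, and m̄ a relation with m̄ ⊆ ⋃_x (W_x × W_x). Suppose (i) hb ∪ m̄ is acyclic, and (ii) every triplet is safe: for all x, all (w, r) ∈ rf with w ∈ W_x, and all w' ∈ W_x with w' ≠ w, either (w', r) ∉ hb or (w', w) ∈ (hb ∪ m̄)⁺. Then there exist strict total orders mo_x on each W_x with m̄ restricted to W_x contained in mo_x, such that hb ∪ (⋃_x mo_x) is acyclic (strong-write-coherence)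 and for every x the relation rf⁻¹ ; mo_x ; hb is irreflexive (read-coherence). -/
/-!
Fix a linear extension `<` of the acyclic relation `(hb ∪ m̄)⁺` (Szpilrajn) and let `mo_x` be its
restriction to `W_x`. Every edge of `hb ∪ ⋃ₓ mo_x` goes up in `<`, so this union is acyclic.
A read-coherence violation `w rf r`, `w mo_x w'`, `w' hb r` is excluded by safety, which would
give `(w', w) ∈ (hb ∪ m̄)⁺`, i.e. `w' < w`.
-/

namespace Relation

variable {α : Type*} {r : α → α → Prop}

theorem exists_linearOrder_of_acyclic (hr : ∀ a, ¬ TransGen r a a) :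
    ∃ o : LinearOrder α, ∀ a b, TransGen r a b → o.lt a b := by
  let _ : PartialOrder α :=
    { le := ReflTransGen r
      le_refl := fun _ => ReflTransGen.refl
      le_trans := fun _ _ _ => ReflTransGen.trans
      le_antisymm := fun a b hab hba => by
        rcases reflTransGen_iff_eq_or_transGen.mp hab with rfl | hab
        · rfl
        · exact (hr a (hab.trans_left hba)).elim }
  refine ⟨(inferInstance : LinearOrder (LinearExtension α)), fun a b hab => ?_⟩
  have hne : a ≠ b := by
    rintro rfl
    exact hr a hab
  exact lt_of_le_of_ne (toLinearExtension.monotone hab.to_reflTransGen) hne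

theorem not_transGen_self_of_le_lt [Preorder α] (h : ∀ a b, r a b → a < b) (a : α) :
    ¬ TransGen r a a := fun ha =>
  lt_irrefl a <| transGen_eq_self (r := ((· < ·) : α → α → Prop)).le a a (TransGen.mono h a a ha)

end Relation

open Relation in
theorem stmt_12_general {E Loc : Type*} (W : Loc → Set E)
    (hb rf mbar : E → E → Prop)
    (hacy : ∀ e, ¬ Relation.TransGen (fun a b => hb a b ∨ mbar a b) e e)
    (hsafe : ∀ (x : Loc) (w r w' : E), rf w r → w ∈ W x → w' ∈ W x → w' ≠ w →
      ¬ hb w' r ∨ Relation.TransGen (fun a b => hb a b ∨ mbar a b) w' w) :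
    ∃ mo : Loc → E → E → Prop,
      (∀ (x : Loc) (a b : E), mo x a b → a ∈ W x ∧ b ∈ W x) ∧
      (∀ (x : Loc) (a : E), ¬ mo x a a) ∧
      (∀ x : Loc, Transitive (mo x)) ∧
      (∀ (x : Loc) (a b : E), a ∈ W x → b ∈ W x → a ≠ b → mo x a b ∨ mo x b a) ∧
      (∀ (x : Loc) (a b : E), a ∈ W x → b ∈ W x → mbar a b → mo x a b) ∧
      (∀ e : E, ¬ Relation.TransGen (fun a b => hb a b ∨ ∃ x, mo x a b) e e) ∧
      (∀ (x : Loc) (r w w' : E), rf w r → mo x w w' → hb w' r → False) := by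
  obtain ⟨_, hlt⟩ := exists_linearOrder_of_acyclic hacy
  have hb_lt a b (h : hb a b) : a < b := hlt a b (.single (.inl h))
  refine ⟨fun x a b => a ∈ W x ∧ b ∈ W x ∧ a < b, ?_, ?_, ?_, ?_, ?_, ?_, ?_⟩
  · exact fun _ _ _ h => ⟨h.1, h.2.1⟩
  · exact fun _ a h => lt_irrefl a h.2.2
  · exact fun _ _ _ _ hab hbc => ⟨hab.1, hbc.2.1, hab.2.2.trans hbc.2.2⟩
  · exact fun _ a b ha hb' hne => (lt_or_gt_of_ne hne).imp (⟨ha, hb', ·⟩) (⟨hb', ha, ·⟩)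
  · exact fun _ a b ha hb' hm => ⟨ha, hb', hlt a b (.single (.inr hm))⟩
  · refine not_transGen_self_of_le_lt ?_
    rintro a b (hab | ⟨_, _, _, hab⟩)
    exacts [hb_lt a b hab, hab]
  · rintro x r w w' hrf ⟨hw, hw', hww'⟩ hw'r
    rcases hsafe x w r w' hrf hw hw' hww'.ne' with hnot | hw'w
    exacts [hnot hw'r, lt_asymm hww' (hlt w' w hw'w)]

/-- Minimal coherence implies SRA-consistency: if hb ∪ m̄ is acyclic and every
triplet is safe, then there are strict total orders mo_x on each W_x extending m̄
such that hb ∪ (⋃_x mo_x) is acyclic (strong-write-coherence) and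
rf⁻¹ ; mo_x ; hb is irreflexive for every x (read-coherence). -/
theorem stmt_12 {E Loc : Type*} [Finite E] (W R : Loc → Set E)
    (hWdisj : ∀ x y : Loc, x ≠ y → Disjoint (W x) (W y))
    (hb rf mbar : E → E → Prop)
    (hhb_irr : ∀ e, ¬ hb e e) (hhb_trans : Transitive hb)
    (hrf : ∀ w r, rf w r → ∃ x, w ∈ W x ∧ r ∈ R x)
    (hrf_fun : ∀ w w' r, rf w r → rf w' r → w = w')
    (hmbar : ∀ a b, mbar a b → ∃ x, a ∈ W x ∧ b ∈ W x)
    (hacy : ∀ e, ¬ Relation.TransGen (fun a b => hb a b ∨ mbar a b) e e)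
    (hsafe : ∀ (x : Loc) (w r w' : E), rf w r → w ∈ W x → w' ∈ W x → w' ≠ w →
      ¬ hb w' r ∨ Relation.TransGen (fun a b => hb a b ∨ mbar a b) w' w) :
    ∃ mo : Loc → E → E → Prop,
      (∀ (x : Loc) (a b : E), mo x a b → a ∈ W x ∧ b ∈ W x) ∧
      (∀ (x : Loc) (a : E), ¬ mo x a a) ∧
      (∀ x : Loc, Transitive (mo x)) ∧
      (∀ (x : Loc) (a b : E), a ∈ W x → b ∈ W x → a ≠ b → mo x a b ∨ mo x b a) ∧
      (∀ (x : Loc) (a b : E), a ∈ W x → b ∈ W x → mbar a b → mo x a b) ∧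
      (∀ e : E, ¬ Relation.TransGen (fun a b => hb a b ∨ ∃ x, mo x a b) e e) ∧
      (∀ (x : Loc) (r w w' : E), rf w r → mo x w w' → hb w' r → False) :=
  stmt_12_general W hb rf mbar hacy hsafe
end
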